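/- Let A be a weakly idempotent complete exact category with enough projectives and injectives, and let (C, W, F) be a hereditary Hovey triple in A such that the cotorsion pair (C, W ∩ F) is right extendable. Then for any object M of A and any integer n ≥ 0 the following are equivalent: (1) M ∈ F_n; (2) there is a conflation M ↣ G ↠ C′ with G ∈ F and C′ ∈ (W ∩ F)_{n−1} such that 0 → Hom_A(X, M) → Hom_A(X, G) → Hom_A(X, C′) → 0 is exact for all X ∈ ⊥((W ∩ F)_n) (for n = 0, (W ∩ F)_{n−1} is interpreted as {0}); (3) Ext^1_A(H, M) = 0 for every H ∈ W ∩ ⊥((W ∩ F)_n); (4) there is a conflation N ↣ L ↠ M with L ∈ (W ∩ F)_n and N ∈ F. -/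

import Mathlib

open CategoryTheory CategoryTheory.Limits

universe w v u v₁ u₁ v₂ u₂ v₃ u₃

namespace CotorsionPaper

variable {A : Type u} [Category.{v} A] [Preadditive A]

/-- The data of an exact structure on an additive category: a distinguished class of
kernel-cokernel pairs, called conflations. -/
structure ExactStruct (A : Type u) [Category.{v} A] [Preadditive A] where
  /-- `IsConflation f g` means that `X ↣ Y ↠ Z` (via `f`, `g`) is a conflation. -/
  IsConflation : ∀ ⦃X Y Z : A⦄, (X ⟶ Y) → (Y ⟶ Z) → Prop

namespace ExactStruct

variable (E : ExactStruct A)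

/-- A morphism is an inflation if it is the first map of some conflation. -/
def Inflation {X Y : A} (f : X ⟶ Y) : Prop :=
  ∃ (Z : A) (g : Y ⟶ Z), E.IsConflation f g

/-- A morphism is a deflation if it is the second map of some conflation. -/
def Deflation {Y Z : A} (g : Y ⟶ Z) : Prop :=
  ∃ (X : A) (f : X ⟶ Y), E.IsConflation f g

/-- Quillen's axioms for an exact category (in Bühler's formulation). -/
structure IsExactCategory : Prop where
  comp_zero : ∀ ⦃X Y Z : A⦄ ⦃f : X ⟶ Y⦄ ⦃g : Y ⟶ Z⦄, E.IsConflation f g → f ≫ g = 0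
  isKernel : ∀ ⦃X Y Z : A⦄ ⦃f : X ⟶ Y⦄ ⦃g : Y ⟶ Z⦄ (h : E.IsConflation f g),
    Nonempty (IsLimit (KernelFork.ofι f (comp_zero h)))
  isCokernel : ∀ ⦃X Y Z : A⦄ ⦃f : X ⟶ Y⦄ ⦃g : Y ⟶ Z⦄ (h : E.IsConflation f g),
    Nonempty (IsColimit (CokernelCofork.ofπ g (comp_zero h)))
  conflation_of_iso : ∀ ⦃X Y Z X' Y' Z' : A⦄ ⦃f : X ⟶ Y⦄ ⦃g : Y ⟶ Z⦄
    (eX : X ≅ X') (eY : Y ≅ Y') (eZ : Z ≅ Z') ⦃f' : X' ⟶ Y'⦄ ⦃g' : Y' ⟶ Z'⦄,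
    E.IsConflation f g → eX.hom ≫ f' = f ≫ eY.hom → eY.hom ≫ g' = g ≫ eZ.hom →
    E.IsConflation f' g'
  id_inflation : ∀ X : A, E.Inflation (𝟙 X)
  id_deflation : ∀ X : A, E.Deflation (𝟙 X)
  inflation_comp : ∀ ⦃X Y Z : A⦄ ⦃f : X ⟶ Y⦄ ⦃g : Y ⟶ Z⦄,
    E.Inflation f → E.Inflation g → E.Inflation (f ≫ g)
  deflation_comp : ∀ ⦃X Y Z : A⦄ ⦃f : X ⟶ Y⦄ ⦃g : Y ⟶ Z⦄,
    E.Deflation f → E.Deflation g → E.Deflation (f ≫ g)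
  inflation_pushout : ∀ ⦃X Y X' : A⦄ ⦃f : X ⟶ Y⦄ (u : X ⟶ X'), E.Inflation f →
    ∃ (Y' : A) (f' : X' ⟶ Y') (v : Y ⟶ Y'), E.Inflation f' ∧ IsPushout f u v f'
  deflation_pullback : ∀ ⦃Y Z Z' : A⦄ ⦃g : Y ⟶ Z⦄ (u : Z' ⟶ Z), E.Deflation g →
    ∃ (Y' : A) (g' : Y' ⟶ Z') (v : Y' ⟶ Y), E.Deflation g' ∧ IsPullback g' v u g

end ExactStruct

/-- An additive category is weakly idempotent complete if every split monomorphism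
has a cokernel. -/
def WIC (A : Type u) [Category.{v} A] [Preadditive A] : Prop :=
  ∀ ⦃X Y : A⦄ (f : X ⟶ Y), (∃ r : Y ⟶ X, f ≫ r = 𝟙 X) → HasCokernel f

namespace ExactStruct

variable (E : ExactStruct A)

/-- An object is projective (relative to the exact structure) if maps out of it lift
along deflations. -/
def ProjObj (P : A) : Prop :=
  ∀ ⦃Y Z : A⦄ ⦃g : Y ⟶ Z⦄, E.Deflation g → ∀ h : P ⟶ Z, ∃ l : P ⟶ Y, l ≫ g = h

/-- An object is injective (relative to the exact structure) if maps into it extend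
along inflations. -/
def InjObj (I : A) : Prop :=
  ∀ ⦃X Y : A⦄ ⦃f : X ⟶ Y⦄, E.Inflation f → ∀ h : X ⟶ I, ∃ l : Y ⟶ I, f ≫ l = h

/-- The exact category has enough projectives: every object admits a deflation from
a projective object. -/
def EnoughProjectives : Prop :=
  ∀ M : A, ∃ (K P : A) (f : K ⟶ P) (g : P ⟶ M), E.ProjObj P ∧ E.IsConflation f g

/-- The exact category has enough injectives. -/
def EnoughInjectives : Prop :=
  ∀ M : A, ∃ (I C : A) (f : M ⟶ I) (g : I ⟶ C), E.InjObj I ∧ E.IsConflation f g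

/-- `Ext¹(M, Y) = 0`: every conflation `Y ↣ Eo ↠ M` splits. -/
def Ext1Zero (M Y : A) : Prop :=
  ∀ ⦃Eo : A⦄ ⦃f : Y ⟶ Eo⦄ ⦃g : Eo ⟶ M⦄, E.IsConflation f g → ∃ s : M ⟶ Eo, s ≫ g = 𝟙 M

end ExactStruct

/-- `ExtZero E n M Y` means `Extⁿ(M, Y) = 0` (defined by dimension shifting along
projective presentations; the value at `n = 0` is irrelevant and set to `True`). -/
def ExtZero (E : ExactStruct A) : ℕ → A → A → Prop
  | 0, _, _ => True
  | 1, M, Y => E.Ext1Zero M Y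
  | (n + 2), M, Y => ∀ ⦃K P : A⦄ ⦃f : K ⟶ P⦄ ⦃g : P ⟶ M⦄,
      E.ProjObj P → E.IsConflation f g → ExtZero E (n + 1) K Y

namespace ExactStruct

variable (E : ExactStruct A)

/-- The right Ext-orthogonal of a class of objects. -/
def rightPerp (X : Set A) : Set A := {M | ∀ C ∈ X, E.Ext1Zero C M}

/-- The left Ext-orthogonal of a class of objects. -/
def leftPerp (Y : Set A) : Set A := {M | ∀ L ∈ Y, E.Ext1Zero M L}

end ExactStruct

/-- `SyzOf E X n K M` : `K` is an `n`-th syzygy of `M`, i.e. there is an acyclic sequence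
`K ↣ X_{n-1} → ⋯ → X_0 ↠ M` with all middle terms in `X`. -/
def SyzOf (E : ExactStruct A) (X : Set A) : ℕ → A → A → Prop
  | 0, K, M => Nonempty (K ≅ M)
  | (n + 1), K, M => ∃ (K' X0 : A) (f : K' ⟶ X0) (g : X0 ⟶ M),
      X0 ∈ X ∧ E.IsConflation f g ∧ SyzOf E X n K K'

/-- `CosyzOf E Y n C M` : `C` is an `n`-th cosyzygy of `M` with respect to `Y`. -/
def CosyzOf (E : ExactStruct A) (Y : Set A) : ℕ → A → A → Prop
  | 0, C, M => Nonempty (M ≅ C)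
  | (n + 1), C, M => ∃ (C' Y0 : A) (f : M ⟶ Y0) (g : Y0 ⟶ C'),
      Y0 ∈ Y ∧ E.IsConflation f g ∧ CosyzOf E Y n C C'

namespace ExactStruct

variable (E : ExactStruct A)

/-- There is an acyclic sequence `X_n ↣ X_{n-1} → ⋯ → X_0 ↠ M` with all `X_i ∈ X`. -/
def pdLE (X : Set A) (n : ℕ) (M : A) : Prop := ∃ K, K ∈ X ∧ SyzOf E X n K M

/-- The `X`-projective dimension of `M`, valued in `ℕ∞`. -/
noncomputable def pdim (X : Set A) (M : A) : ℕ∞ :=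
  sInf ((fun m : ℕ => (m : ℕ∞)) '' {m : ℕ | E.pdLE X m M})

/-- `X_n`: the class of objects of `X`-projective dimension at most `n`. -/
def pdSet (X : Set A) (n : ℕ) : Set A := {M | E.pdim X M ≤ (n : ℕ∞)}

/-- There is an acyclic sequence `M ↣ Y^0 → ⋯ → Y^{n-1} ↠ Y^n` with all `Y^i ∈ Y`. -/
def idLE (Y : Set A) (n : ℕ) (M : A) : Prop := ∃ C, C ∈ Y ∧ CosyzOf E Y n C M

/-- The `Y`-injective dimension of `M`, valued in `ℕ∞`. -/
noncomputable def idim (Y : Set A) (M : A) : ℕ∞ :=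
  sInf ((fun m : ℕ => (m : ℕ∞)) '' {m : ℕ | E.idLE Y m M})

/-- `Y_n`: the class of objects of `Y`-injective dimension at most `n`. -/
def idSet (Y : Set A) (n : ℕ) : Set A := {M | E.idim Y M ≤ (n : ℕ∞)}

/-- `(X, Y)` is a cotorsion pair. -/
def IsCotorsionPair (X Y : Set A) : Prop :=
  E.rightPerp X = Y ∧ E.leftPerp Y = X

/-- `(X, Y)` is a complete cotorsion pair. -/
def IsCompleteCP (X Y : Set A) : Prop :=
  E.IsCotorsionPair X Y ∧
  (∀ M : A, ∃ (Y' X' : A) (f : Y' ⟶ X') (g : X' ⟶ M),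
    Y' ∈ Y ∧ X' ∈ X ∧ E.IsConflation f g) ∧
  (∀ M : A, ∃ (Y'' X'' : A) (f : M ⟶ Y'') (g : Y'' ⟶ X''),
    Y'' ∈ Y ∧ X'' ∈ X ∧ E.IsConflation f g)

/-- Heredity conditions: `X` is closed under kernels of deflations and `Y` is closed
under cokernels of inflations. -/
def HereditaryClasses (X Y : Set A) : Prop :=
  (∀ ⦃K B C : A⦄ ⦃f : K ⟶ B⦄ ⦃g : B ⟶ C⦄,
    E.IsConflation f g → B ∈ X → C ∈ X → K ∈ X) ∧
  (∀ ⦃K B C : A⦄ ⦃f : K ⟶ B⦄ ⦃g : B ⟶ C⦄,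
    E.IsConflation f g → K ∈ Y → B ∈ Y → C ∈ Y)

/-- `W` is a thick class: closed under direct summands and two-out-of-three
in conflations. -/
def IsThick (W : Set A) : Prop :=
  (∀ ⦃M N : A⦄ (s : M ⟶ N) (r : N ⟶ M), s ≫ r = 𝟙 M → N ∈ W → M ∈ W) ∧
  (∀ ⦃X Y Z : A⦄ ⦃f : X ⟶ Y⦄ ⦃g : Y ⟶ Z⦄, E.IsConflation f g →
    ((X ∈ W → Y ∈ W → Z ∈ W) ∧ (X ∈ W → Z ∈ W → Y ∈ W) ∧ (Y ∈ W → Z ∈ W → X ∈ W)))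

/-- `(C, W, F)` is a Hovey triple. -/
def IsHoveyTriple (C W F : Set A) : Prop :=
  E.IsCompleteCP (C ∩ W) F ∧ E.IsCompleteCP C (W ∩ F) ∧ E.IsThick W

/-- `(C, W, F)` is a hereditary Hovey triple. -/
def IsHereditaryHoveyTriple (C W F : Set A) : Prop :=
  E.IsHoveyTriple C W F ∧ E.HereditaryClasses (C ∩ W) F ∧ E.HereditaryClasses C (W ∩ F)

/-- A complete cotorsion pair `(X, Y)` is left extendable if `(X_n, X_n^⊥)` is a
complete cotorsion pair for every `n ≥ 0`. -/
def LeftExtendable (X Y : Set A) : Prop :=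
  E.IsCompleteCP X Y ∧
  ∀ n : ℕ, E.IsCompleteCP (E.pdSet X n) (E.rightPerp (E.pdSet X n))

/-- A complete cotorsion pair `(X, Y)` is right extendable if `(⊥(Y_n), Y_n)` is a
complete cotorsion pair for every `n ≥ 0`. -/
def RightExtendable (X Y : Set A) : Prop :=
  E.IsCompleteCP X Y ∧
  ∀ n : ℕ, E.IsCompleteCP (E.leftPerp (E.idSet Y n)) (E.idSet Y n)

/-- The class `Y` is the right Ext-orthogonal of a set (i.e. small family) of objects. -/
def SetGenerated (Y : Set A) : Prop :=
  ∃ (ι : Type v) (G : ι → A), Y = {M | ∀ i, E.Ext1Zero (G i) M}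

/-- Trivial cofibrations of the exact model structure associated to a Hovey triple:
inflations with cokernel in `C ∩ W`. -/
def TrivCof (C W : Set A) : MorphismProperty A := fun X Y f =>
  ∃ (Z : A) (g : Y ⟶ Z), E.IsConflation f g ∧ Z ∈ C ∩ W

/-- Trivial fibrations: deflations with kernel in `W ∩ F`. -/
def TrivFib (W F : Set A) : MorphismProperty A := fun Y Z g =>
  ∃ (K : A) (f : K ⟶ Y), E.IsConflation f g ∧ K ∈ W ∩ F

/-- Weak equivalences of the exact model structure associated to a Hovey triple. -/
def WeakEquiv (C W F : Set A) : MorphismProperty A := fun X Y f =>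
  ∃ (Z : A) (i : X ⟶ Z) (p : Z ⟶ Y), E.TrivCof C W i ∧ E.TrivFib W F p ∧ i ≫ p = f

/-- The homotopy category of the exact model structure associated to the Hovey triple
`(C, W, F)`: the localization of `A` at the weak equivalences. -/
abbrev Ho (C W F : Set A) := (E.WeakEquiv C W F).Localization

end ExactStruct

/-- The full subcategory on a class of objects. -/
abbrev SubCat (S : Set A) := ObjectProperty.FullSubcategory (fun X : A => X ∈ S)

/-- The stable relation: two maps are identified if their difference factors through
an object of `P`. -/
def stableRel (S P : Set A) : HomRel (SubCat S) := fun X Y f g =>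
  ∃ (Q : A) (u : X.obj ⟶ Q) (v : Q ⟶ Y.obj),
    Q ∈ P ∧ (f.hom : X.obj ⟶ Y.obj) - (g.hom : X.obj ⟶ Y.obj) = u ≫ v

/-- The stable category of the full subcategory on `S`, modulo maps factoring through
objects of `P`. -/
abbrev StableCat (S P : Set A) := CategoryTheory.Quotient (stableRel S P)

namespace ExactStruct

variable (E : ExactStruct A)

/-- `P0` is a projective object of the full exact subcategory on `S`. -/
def SubProjObj (S : Set A) (P0 : A) : Prop :=
  P0 ∈ S ∧ ∀ ⦃X Y Z : A⦄ ⦃f : X ⟶ Y⦄ ⦃g : Y ⟶ Z⦄,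
    E.IsConflation f g → X ∈ S → Y ∈ S → Z ∈ S →
    ∀ h : P0 ⟶ Z, ∃ l : P0 ⟶ Y, l ≫ g = h

/-- `I0` is an injective object of the full exact subcategory on `S`. -/
def SubInjObj (S : Set A) (I0 : A) : Prop :=
  I0 ∈ S ∧ ∀ ⦃X Y Z : A⦄ ⦃f : X ⟶ Y⦄ ⦃g : Y ⟶ Z⦄,
    E.IsConflation f g → X ∈ S → Y ∈ S → Z ∈ S →
    ∀ h : X ⟶ I0, ∃ l : Y ⟶ I0, f ≫ l = h

/-- The full exact subcategory on `S` is a Frobenius category whose class of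
projective-injective objects is `P`. -/
def IsFrobeniusSub (S P : Set A) : Prop :=
  (∀ Q0 : A, E.SubProjObj S Q0 ↔ Q0 ∈ S ∩ P) ∧
  (∀ Q0 : A, E.SubInjObj S Q0 ↔ Q0 ∈ S ∩ P) ∧
  (∀ M ∈ S, ∃ (K Q0 : A) (f : K ⟶ Q0) (g : Q0 ⟶ M),
    K ∈ S ∧ Q0 ∈ P ∧ E.IsConflation f g) ∧
  (∀ M ∈ S, ∃ (Q0 C0 : A) (f : M ⟶ Q0) (g : Q0 ⟶ C0),
    C0 ∈ S ∧ Q0 ∈ P ∧ E.IsConflation f g)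

end ExactStruct

/-- The canonical exact structure of an abelian category: conflations are the short
exact sequences. -/
def abelianES (A : Type u) [Category.{v} A] [Abelian A] : ExactStruct A where
  IsConflation X Y Z f g :=
    ∃ w : f ≫ g = 0, Mono f ∧ Epi g ∧ (ShortComplex.mk f g w).Exact

/-- A recollement (at the level of plain categories) of `T₂` relative to `T₁` and `T₃`. -/
structure Recollement (T₁ : Type u₁) (T₂ : Type u₂) (T₃ : Type u₃)
    [Category.{v₁} T₁] [Category.{v₂} T₂] [Category.{v₃} T₃] where
  i : T₁ ⥤ T₂
  iStar : T₂ ⥤ T₁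
  iShriek : T₂ ⥤ T₁
  j : T₂ ⥤ T₃
  jShriek : T₃ ⥤ T₂
  jStar : T₃ ⥤ T₂
  adj₁ : iStar ⊣ i
  adj₂ : i ⊣ iShriek
  adj₃ : jShriek ⊣ j
  adj₄ : j ⊣ jStar
  i_ff : i.FullyFaithful
  jShriek_ff : jShriek.FullyFaithful
  jStar_ff : jStar.FullyFaithful
  ker : ∀ X : T₂, Limits.IsZero (j.obj X) ↔ ∃ Y : T₁, Nonempty (X ≅ i.obj Y)

section Presentable

/-- A preorder is `λ`-directed if every subset of cardinality `< λ` has an upper bound. -/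
def IsLamDirected (lam : Cardinal.{v}) (J : Type v) [Preorder J] : Prop :=
  ∀ s : Set J, Cardinal.mk s < lam → ∃ u : J, ∀ j ∈ s, j ≤ u

/-- An object `X` is `λ`-presentable if `Hom(X, −)` preserves `λ`-directed colimits. -/
def IsPresentableObj (lam : Cardinal.{v}) (X : A) : Prop :=
  ∀ (J : Type v) [Preorder J], IsLamDirected lam J →
    ∀ (D : J ⥤ A) (c : Cocone D), IsColimit c →
      (∀ f : X ⟶ c.pt, ∃ (j : J) (g : X ⟶ D.obj j), g ≫ c.ι.app j = f) ∧
      (∀ (j j' : J) (g : X ⟶ D.obj j) (g' : X ⟶ D.obj j'),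
        g ≫ c.ι.app j = g' ≫ c.ι.app j' →
        ∃ (l : J) (hj : j ≤ l) (hj' : j' ≤ l),
          g ≫ D.map (homOfLE hj) = g' ≫ D.map (homOfLE hj'))

/-- `X` is a `λ`-directed colimit of objects isomorphic to members of the family `G`. -/
def IsLamDirColimitOf (lam : Cardinal.{v}) {ι : Type v} (G : ι → A) (X : A)
    (J : Type v) [Preorder J] : Prop :=
  IsLamDirected lam J ∧
  ∃ (D : J ⥤ A) (c : Cocone D), Nonempty (IsColimit c) ∧ Nonempty (c.pt ≅ X) ∧
    ∀ j : J, ∃ i : ι, Nonempty (D.obj j ≅ G i)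

/-- The category `A` is `λ`-accessible. -/
def IsAccessibleCat (A : Type u) [Category.{v} A] (lam : Cardinal.{v}) : Prop :=
  Cardinal.IsRegular lam ∧
  ∃ (ι : Type v) (G : ι → A),
    (∀ i, IsPresentableObj lam (G i)) ∧
    ∀ X : A, ∃ (J : Type v) (instJ : Preorder J),
      @IsLamDirColimitOf A _ lam ι G X J instJ

/-- The category `A` is locally presentable: cocomplete and accessible. -/
def IsLocallyPresentableCat (A : Type u) [Category.{v} A] : Prop :=
  HasColimitsOfSize.{v, v} A ∧ ∃ lam : Cardinal.{v}, IsAccessibleCat A lam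

end Presentable

end CotorsionPaper


/-!
`Extⁿ⁺¹(H, -)` is handled as `Ext¹(K, -)` for an `n`-th syzygy `K` of `H` along projective
presentations; by heredity, syzygies of objects of `C ∩ W` stay in `C ∩ W`, and an object of
`F`-injective dimension `k` has `Extᵏ⁺¹(C ∩ W, -) = 0`.

(1) ⇒ (4): in a special `(C ∩ W)`-precover `N ↣ L ↠ M` also `Extⁿ⁺¹(C ∩ W, L) = 0`; an object of
`C ∩ W` with this property has a `(W ∩ F)`-coresolution of length `n`, since the cokernel of its
special `(W ∩ F)`-preenvelope is again in `C ∩ W` (thickness of `W`) with `Extⁿ(C ∩ W, -) = 0`.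
(4) ⇒ (2): push `N ↣ L` out along the first step `L ↣ Y⁰` of that coresolution; the new middle
term is in `F` as `F` is closed under cokernels of inflations, and `Hom(X, -)` stays exact because
`Ext¹(X, L) = 0` for `X ∈ ⊥((W ∩ F)_n)`.
(2) ⇒ (3) is the long exact `Ext` sequence.
(3) ⇒ (1): induction on `n` along a special `F`-preenvelope `M ↣ G ↠ Q`; syzygies of objects of
`W ∩ ⊥((W ∩ F)_{n-1})` lie in `W ∩ ⊥((W ∩ F)_n)`, so `Q` satisfies (3) for `n - 1`.
-/

namespace CotorsionPaper

section Development

variable {A : Type u} [Category.{v} A] [Preadditive A] {E : ExactStruct A}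

def IsHomExact (T : A) {M G Q : A} (f : M ⟶ G) (g : G ⟶ Q) : Prop :=
  (∀ h₁ h₂ : T ⟶ M, h₁ ≫ f = h₂ ≫ f → h₁ = h₂) ∧
  (∀ h : T ⟶ G, h ≫ g = 0 → ∃ h' : T ⟶ M, h' ≫ f = h) ∧
  (∀ h : T ⟶ Q, ∃ h' : T ⟶ G, h' ≫ g = h)

namespace ExactStruct.IsExactCategory

variable {X Y Z T : A} {f : X ⟶ Y} {g : Y ⟶ Z}

lemma mono_of_isConflation (hE : E.IsExactCategory) (hc : E.IsConflation f g) : Mono f := by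
  obtain ⟨hl⟩ := hE.isKernel hc
  exact ⟨fun a b hab => Fork.IsLimit.hom_ext hl (by simpa using hab)⟩

lemma epi_of_isConflation (hE : E.IsExactCategory) (hc : E.IsConflation f g) : Epi g := by
  obtain ⟨hl⟩ := hE.isCokernel hc
  exact ⟨fun a b hab => Cofork.IsColimit.hom_ext hl (by simpa using hab)⟩

lemma exists_lift_of_comp_eq_zero (hE : E.IsExactCategory) (hc : E.IsConflation f g)
    (k : T ⟶ Y) (hk : k ≫ g = 0) : ∃ l : T ⟶ X, l ≫ f = k := by
  obtain ⟨hl⟩ := hE.isKernel hc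
  obtain ⟨l, hl'⟩ := Fork.IsLimit.lift' hl k (by simp [hk])
  exact ⟨l, by simpa using hl'⟩

lemma exists_desc_of_comp_eq_zero (hE : E.IsExactCategory) (hc : E.IsConflation f g)
    (k : Y ⟶ T) (hk : f ≫ k = 0) : ∃ d : Z ⟶ T, g ≫ d = k := by
  obtain ⟨hl⟩ := hE.isCokernel hc
  obtain ⟨d, hd⟩ := Cofork.IsColimit.desc' hl k (by simp [hk])
  exact ⟨d, by simpa using hd⟩

lemma exists_retraction_of_section (hE : E.IsExactCategory) (hc : E.IsConflation f g)
    {s : Z ⟶ Y} (hs : s ≫ g = 𝟙 Z) : ∃ r : Y ⟶ X, f ≫ r = 𝟙 X := by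
  obtain ⟨r, hr⟩ := hE.exists_lift_of_comp_eq_zero hc (𝟙 Y - g ≫ s)
    (by simp [Preadditive.sub_comp, hs])
  have := hE.mono_of_isConflation hc
  refine ⟨r, (cancel_mono f).1 ?_⟩
  rw [Category.assoc, hr, Preadditive.comp_sub, ← Category.assoc, hE.comp_zero hc]
  simp

lemma exists_isConflation_id (hE : E.IsExactCategory) (M : A) :
    ∃ (Z : A) (g : M ⟶ Z), E.IsConflation (𝟙 M) g ∧ IsZero Z := by
  obtain ⟨Z, g, hc⟩ := hE.id_inflation M
  have hg : g = 0 := by simpa using hE.comp_zero hc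
  have := hE.epi_of_isConflation hc
  refine ⟨Z, g, hc, (IsZero.iff_id_eq_zero Z).2 ((cancel_epi g).1 ?_)⟩
  simp [hg]

lemma ext1Zero_of_iso (hE : E.IsExactCategory) {M M' : A} (e : M ≅ M')
    (h : E.Ext1Zero T M) : E.Ext1Zero T M' := by
  intro _ f g hc
  exact h (hE.conflation_of_iso e.symm (Iso.refl _) (Iso.refl _) (f' := e.hom ≫ f) hc
    (by simp) (by simp))

lemma ext1Zero_of_isZero (hE : E.IsExactCategory) (hX : IsZero X) (T : A) :
    E.Ext1Zero T X := by
  intro B f g hc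
  obtain ⟨s, hs⟩ := hE.exists_desc_of_comp_eq_zero hc (𝟙 B) (by simp [hX.eq_of_src f 0])
  have := hE.epi_of_isConflation hc
  exact ⟨s, (cancel_epi g).1 (by rw [← Category.assoc, hs, Category.id_comp, Category.comp_id])⟩

lemma exists_isConflation_pushout (hE : E.IsExactCategory) (hc : E.IsConflation f g)
    (h : X ⟶ T) : ∃ (Y' : A) (f' : T ⟶ Y') (v : Y ⟶ Y') (g' : Y' ⟶ Z),
      E.IsConflation f' g' ∧ IsPushout f h v f' ∧ v ≫ g' = g := by
  obtain ⟨Y', f', v, ⟨Z', g₀, hc₀⟩, hpo⟩ := hE.inflation_pushout h ⟨Z, g, hc⟩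
  have hsq : f ≫ g = h ≫ (0 : T ⟶ Z) := by simp [hE.comp_zero hc]
  set g' := hpo.desc g 0 hsq
  have hvg' : v ≫ g' = g := hpo.inl_desc g 0 hsq
  have hf'g' : f' ≫ g' = 0 := hpo.inr_desc g 0 hsq
  obtain ⟨t, ht⟩ := hE.exists_desc_of_comp_eq_zero hc₀ g' hf'g'
  obtain ⟨t', ht'⟩ := hE.exists_desc_of_comp_eq_zero hc (v ≫ g₀) (by
    rw [← Category.assoc, hpo.w, Category.assoc, hE.comp_zero hc₀, Limits.comp_zero])
  have := hE.epi_of_isConflation hc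
  have := hE.epi_of_isConflation hc₀
  have hg't' : g' ≫ t' = g₀ := by
    apply hpo.hom_ext
    · rw [← Category.assoc, hvg', ht']
    · rw [← Category.assoc, hf'g', zero_comp, hE.comp_zero hc₀]
  have htt' : t ≫ t' = 𝟙 Z' := by
    rw [← cancel_epi g₀, ← Category.assoc, ht, hg't', Category.comp_id]
  have ht't : t' ≫ t = 𝟙 Z := by
    rw [← cancel_epi g, ← Category.assoc, ht', Category.assoc, ht, hvg', Category.comp_id]
  refine ⟨Y', f', v, g', ?_, hpo, hvg'⟩
  exact hE.conflation_of_iso (Iso.refl T) (Iso.refl Y') ⟨t, t', htt', ht't⟩ hc₀ (by simp)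
    (by simpa using ht.symm)

lemma exists_isConflation_pullback (hE : E.IsExactCategory) (hc : E.IsConflation f g)
    (h : T ⟶ Z) : ∃ (Y' : A) (f' : X ⟶ Y') (v : Y' ⟶ Y) (g' : Y' ⟶ T),
      E.IsConflation f' g' ∧ IsPullback g' v h g := by
  obtain ⟨Y', g', v, ⟨X', f₀, hc₀⟩, hpb⟩ := hE.deflation_pullback h ⟨X, f, hc⟩
  have hsq : (0 : X ⟶ T) ≫ h = f ≫ g := by simp [hE.comp_zero hc]
  set f' := hpb.lift 0 f hsq
  have hf'g' : f' ≫ g' = 0 := hpb.lift_fst 0 f hsq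
  have hf'v : f' ≫ v = f := hpb.lift_snd 0 f hsq
  obtain ⟨t, ht⟩ := hE.exists_lift_of_comp_eq_zero hc₀ f' hf'g'
  obtain ⟨t', ht'⟩ := hE.exists_lift_of_comp_eq_zero hc (f₀ ≫ v) (by
    rw [Category.assoc, ← hpb.w, ← Category.assoc, hE.comp_zero hc₀, zero_comp])
  have := hE.mono_of_isConflation hc
  have := hE.mono_of_isConflation hc₀
  have ht'f' : t' ≫ f' = f₀ := by
    apply hpb.hom_ext
    · rw [Category.assoc, hf'g', Limits.comp_zero, hE.comp_zero hc₀]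
    · rw [Category.assoc, hf'v, ht']
  have htt' : t ≫ t' = 𝟙 X := by
    rw [← cancel_mono f, Category.assoc, ht', ← Category.assoc, ht, hf'v, Category.id_comp]
  have ht't : t' ≫ t = 𝟙 X' := by
    rw [← cancel_mono f₀, Category.assoc, ht, ht'f', Category.id_comp]
  refine ⟨Y', f', v, g', ?_, hpb⟩
  exact hE.conflation_of_iso ⟨t', t, ht't, htt'⟩ (Iso.refl Y') (Iso.refl T) hc₀
    (by simpa using ht'f') (by simp)

/-- `P` is the pushout of `u` along `g`. -/
lemma exists_splice (hE : E.IsExactCategory) (hc : E.IsConflation f g) {Y₀ Y₁ : A}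
    {u : Y ⟶ Y₀} {w : Y₀ ⟶ Y₁} (hu : E.IsConflation u w) :
    ∃ (P : A) (v : Y₀ ⟶ P) (f' : Z ⟶ P) (g' : P ⟶ Y₁),
      E.IsConflation (f ≫ u) v ∧ E.IsConflation f' g' ∧ v ≫ g' = w := by
  obtain ⟨P, f', v, g', hc', hpo, hvg'⟩ := hE.exists_isConflation_pushout hu g
  obtain ⟨Q, q, hq⟩ := hE.inflation_comp ⟨_, _, hc⟩ ⟨_, _, hu⟩
  obtain ⟨e, he⟩ := hE.exists_desc_of_comp_eq_zero hc (u ≫ q) (by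
    rw [← Category.assoc]; exact hE.comp_zero hq)
  set c := hpo.desc q e he.symm
  have hvc : v ≫ c = q := hpo.inl_desc q e he.symm
  have hf'c : f' ≫ c = e := hpo.inr_desc q e he.symm
  obtain ⟨d, hd⟩ := hE.exists_desc_of_comp_eq_zero hq v (by
    rw [Category.assoc, hpo.w, ← Category.assoc, hE.comp_zero hc, zero_comp])
  have := hE.epi_of_isConflation hq
  have := hE.epi_of_isConflation hc
  have hdc : d ≫ c = 𝟙 Q := by
    rw [← cancel_epi q, ← Category.assoc, hd, hvc, Category.comp_id]
  have hed : e ≫ d = f' := by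
    rw [← cancel_epi g, ← Category.assoc, he, Category.assoc, hd, hpo.w]
  have hcd : c ≫ d = 𝟙 P := by
    apply hpo.hom_ext
    · rw [← Category.assoc, hvc, hd, Category.comp_id]
    · rw [← Category.assoc, hf'c, hed, Category.comp_id]
  refine ⟨P, v, f', g', ?_, hc', hvg'⟩
  exact hE.conflation_of_iso (Iso.refl X) (Iso.refl Y₀) ⟨d, c, hdc, hcd⟩ hq (by simp)
    (by simpa using hd.symm)

lemma exists_lift_of_ext1Zero (hE : E.IsExactCategory) (hc : E.IsConflation f g)
    (hT : E.Ext1Zero T X) (h : T ⟶ Z) : ∃ l : T ⟶ Y, l ≫ g = h := by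
  obtain ⟨_, _, v, _, hc', hpb⟩ := hE.exists_isConflation_pullback hc h
  obtain ⟨s, hs⟩ := hT hc'
  exact ⟨s ≫ v, by rw [Category.assoc, ← hpb.w, ← Category.assoc, hs, Category.id_comp]⟩

lemma exists_extend_of_ext1Zero (hE : E.IsExactCategory) (hc : E.IsConflation f g)
    (hT : E.Ext1Zero Z T) (h : X ⟶ T) : ∃ l : Y ⟶ T, f ≫ l = h := by
  obtain ⟨_, _, v, _, hc', hpo, -⟩ := hE.exists_isConflation_pushout hc h
  obtain ⟨s, hs⟩ := hT hc'
  obtain ⟨r, hr⟩ := hE.exists_retraction_of_section hc' hs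
  exact ⟨v ≫ r, by rw [← Category.assoc, hpo.w, Category.assoc, hr, Category.comp_id]⟩

variable {K P H : A} {κ : K ⟶ P} {π : P ⟶ H}

lemma ext1Zero_of_forall_extend (hE : E.IsExactCategory) (hκ : E.IsConflation κ π)
    (hP : E.ProjObj P) (hext : ∀ h : K ⟶ T, ∃ l : P ⟶ T, κ ≫ l = h) : E.Ext1Zero H T := by
  intro B a b hc
  obtain ⟨p, hp⟩ := hP ⟨_, _, hc⟩ π
  obtain ⟨k, hk⟩ := hE.exists_lift_of_comp_eq_zero hc (κ ≫ p) (by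
    rw [Category.assoc, hp, hE.comp_zero hκ])
  obtain ⟨l, hl⟩ := hext k
  obtain ⟨s, hs⟩ := hE.exists_desc_of_comp_eq_zero hκ (p - l ≫ a) (by
    rw [Preadditive.comp_sub, ← Category.assoc, hl, hk, sub_self])
  have := hE.epi_of_isConflation hκ
  refine ⟨s, (cancel_epi π).1 ?_⟩
  rw [← Category.assoc, hs, Preadditive.sub_comp, Category.assoc, hE.comp_zero hc, Limits.comp_zero,
    sub_zero, hp, Category.comp_id]

lemma ext1Zero_sub_of_forall_lift (hE : E.IsExactCategory) (hproj : E.EnoughProjectives)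
    (hc : E.IsConflation f g) (hY : E.Ext1Zero T Y)
    (hsurj : ∀ t : T ⟶ Z, ∃ s : T ⟶ Y, s ≫ g = t) : E.Ext1Zero T X := by
  obtain ⟨K, P, κ, π, hP, hκ⟩ := hproj T
  refine hE.ext1Zero_of_forall_extend hκ hP fun u => ?_
  obtain ⟨l, hl⟩ := hE.exists_extend_of_ext1Zero hκ hY (u ≫ f)
  obtain ⟨d, hd⟩ := hE.exists_desc_of_comp_eq_zero hκ (l ≫ g) (by
    rw [← Category.assoc, hl, Category.assoc, hE.comp_zero hc, Limits.comp_zero])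
  obtain ⟨s, hs⟩ := hsurj d
  obtain ⟨m, hm⟩ := hE.exists_lift_of_comp_eq_zero hc (l - π ≫ s) (by
    rw [Preadditive.sub_comp, Category.assoc, hs, hd, sub_self])
  have := hE.mono_of_isConflation hc
  refine ⟨m, (cancel_mono f).1 ?_⟩
  rw [Category.assoc, hm, Preadditive.comp_sub, hl, ← Category.assoc, hE.comp_zero hκ,
    zero_comp, sub_zero]

/-- `Ext¹(K, X) ≅ Ext²(H, X)` sits between `Ext¹(H, Z)` and `Ext²(H, Y) ≅ Ext¹(K, Y)`. -/
lemma ext1Zero_sub_of_syzygy (hE : E.IsExactCategory) (hproj : E.EnoughProjectives)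
    (hκ : E.IsConflation κ π) (hP : E.ProjObj P) (hc : E.IsConflation f g)
    (hY : E.Ext1Zero K Y) (hZ : E.Ext1Zero H Z) : E.Ext1Zero K X := by
  refine hE.ext1Zero_sub_of_forall_lift hproj hc hY fun t => ?_
  obtain ⟨l, hl⟩ := hE.exists_extend_of_ext1Zero hκ hZ t
  obtain ⟨s, hs⟩ := hP ⟨_, _, hc⟩ l
  exact ⟨κ ≫ s, by rw [Category.assoc, hs, hl]⟩

/-- `Ext¹(H, Z)` sits between `Ext¹(H, Y)` and `Ext²(H, X) ≅ Ext¹(K, X)`. -/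
lemma ext1Zero_quotient_of_syzygy (hE : E.IsExactCategory) (hκ : E.IsConflation κ π)
    (hP : E.ProjObj P) (hc : E.IsConflation f g) (hY : E.Ext1Zero H Y)
    (hX : E.Ext1Zero K X) : E.Ext1Zero H Z := by
  refine hE.ext1Zero_of_forall_extend hκ hP fun h => ?_
  obtain ⟨t, ht⟩ := hE.exists_lift_of_ext1Zero hc hX h
  obtain ⟨l, hl⟩ := hE.exists_extend_of_ext1Zero hκ hY t
  exact ⟨l ≫ g, by rw [← Category.assoc, hl, ht]⟩

lemma ext1Zero_middle (hE : E.IsExactCategory) (hproj : E.EnoughProjectives)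
    (hc : E.IsConflation f g) (hX : E.Ext1Zero T X) (hZ : E.Ext1Zero T Z) :
    E.Ext1Zero T Y := by
  obtain ⟨K, P, κ, π, hP, hκ⟩ := hproj T
  refine hE.ext1Zero_of_forall_extend hκ hP fun u => ?_
  obtain ⟨l, hl⟩ := hE.exists_extend_of_ext1Zero hκ hZ (u ≫ g)
  obtain ⟨p, hp⟩ := hP ⟨_, _, hc⟩ l
  obtain ⟨a, ha⟩ := hE.exists_lift_of_comp_eq_zero hc (u - κ ≫ p) (by
    rw [Preadditive.sub_comp, Category.assoc, hp, hl, sub_self])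
  obtain ⟨m, hm⟩ := hE.exists_extend_of_ext1Zero hκ hX a
  exact ⟨p + m ≫ f, by rw [Preadditive.comp_add, ← Category.assoc, hm, ha, add_sub_cancel]⟩

end ExactStruct.IsExactCategory

namespace ExactStruct

variable {Y : Set A} {M : A} {m : ℕ}

lemma mem_idSet_iff : M ∈ E.idSet Y m ↔ ∃ k ≤ m, E.idLE Y k M := by
  simp only [idSet, idim, Set.mem_ofPred_eq]
  constructor
  · intro h
    obtain ⟨_, ⟨k, hk, rfl⟩, hlt⟩ :=
      sInf_lt_iff.1 (h.trans_lt (ENat.natCast_lt_natCast.2 m.lt_succ_self))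
    exact ⟨k, Nat.lt_succ_iff.1 (ENat.natCast_lt_natCast.1 hlt), hk⟩
  · rintro ⟨k, hkm, hk⟩
    exact sInf_le_of_le ⟨k, hk, rfl⟩ (ENat.natCast_le_natCast.2 hkm)

lemma mem_idSet_zero_iff : M ∈ E.idSet Y 0 ↔ E.idLE Y 0 M := by
  simp [mem_idSet_iff]

lemma mem_idSet_of_mem (hM : M ∈ Y) (m : ℕ) : M ∈ E.idSet Y m :=
  mem_idSet_iff.2 ⟨0, m.zero_le, M, hM, ⟨Iso.refl M⟩⟩

lemma idLE_succ_of_isConflation {Y₀ M₁ : A} {f : M ⟶ Y₀} {g : Y₀ ⟶ M₁}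
    (hc : E.IsConflation f g) (hY₀ : Y₀ ∈ Y) {k : ℕ} (hM₁ : E.idLE Y k M₁) :
    E.idLE Y (k + 1) M := by
  obtain ⟨V, hV, hcos⟩ := hM₁
  exact ⟨V, hV, M₁, Y₀, f, g, hY₀, hc, hcos⟩

lemma mem_idSet_succ_of_isConflation {Y₀ M₁ : A} {f : M ⟶ Y₀} {g : Y₀ ⟶ M₁}
    (hc : E.IsConflation f g) (hY₀ : Y₀ ∈ Y) (hM₁ : M₁ ∈ E.idSet Y m) :
    M ∈ E.idSet Y (m + 1) := by
  obtain ⟨k, hkm, hk⟩ := mem_idSet_iff.1 hM₁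
  exact mem_idSet_iff.2 ⟨k + 1, by omega, idLE_succ_of_isConflation hc hY₀ hk⟩

lemma leftPerp_idSet_subset : E.leftPerp (E.idSet Y m) ⊆ E.leftPerp Y :=
  fun _ hX V hV => hX V (mem_idSet_of_mem hV m)

variable (E) in
def syzygies (S : Set A) : Set A :=
  {K | ∃ (P H : A) (κ : K ⟶ P) (π : P ⟶ H), E.ProjObj P ∧ E.IsConflation κ π ∧ H ∈ S}

lemma syzygies_mono : Monotone E.syzygies :=
  fun _ _ hST _ ⟨P, H, κ, π, hP, hκ, hH⟩ => ⟨P, H, κ, π, hP, hκ, hST hH⟩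

lemma iterate_syzygies_antitone {S : Set A} (hS : E.syzygies S ⊆ S) :
    Antitone fun n => E.syzygies^[n] S := by
  refine antitone_nat_of_succ_le fun n => ?_
  induction n with
  | zero => exact hS
  | succ n ih =>
    simp only [Function.iterate_succ_apply'] at ih ⊢
    exact syzygies_mono ih

lemma iterate_syzygies_subset {S : Set A} (hS : E.syzygies S ⊆ S) (n : ℕ) :
    E.syzygies^[n] S ⊆ S :=
  iterate_syzygies_antitone hS n.zero_le

namespace IsExactCategory

lemma ext1Zero_of_idLE_zero (hE : E.IsExactCategory) {T : A} (hM : E.idLE Y 0 M)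
    (hT : ∀ V ∈ Y, E.Ext1Zero T V) : E.Ext1Zero T M := by
  obtain ⟨V, hV, ⟨e⟩⟩ := hM
  exact hE.ext1Zero_of_iso e.symm (hT V hV)

lemma ext1Zero_iterate_syzygies_of_idLE (hE : E.IsExactCategory)
    (hproj : E.EnoughProjectives) {S : Set A} (hSY : ∀ K ∈ S, ∀ V ∈ Y, E.Ext1Zero K V)
    (hS : E.syzygies S ⊆ S) {k : ℕ} (hM : E.idLE Y k M) :
    ∀ K ∈ E.syzygies^[k] S, E.Ext1Zero K M := by
  induction k generalizing M with
  | zero => exact fun K hK => hE.ext1Zero_of_idLE_zero hM (hSY K hK)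
  | succ j ih =>
    obtain ⟨V, hV, M₁, Y₀, f, g, hY₀, hc, hM₁⟩ := hM
    intro K hK
    have hKS : K ∈ S := iterate_syzygies_subset hS (j + 1) hK
    rw [Function.iterate_succ_apply'] at hK
    obtain ⟨P, H, κ, π, hP, hκ, hH⟩ := hK
    exact hE.ext1Zero_sub_of_syzygy hproj hκ hP hc (hSY K hKS Y₀ hY₀) (ih ⟨V, hV, hM₁⟩ H hH)

lemma mem_leftPerp_idSet_succ_of_syzygy (hE : E.IsExactCategory)
    (hproj : E.EnoughProjectives) {K P H : A} {κ : K ⟶ P} {π : P ⟶ H}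
    (hκ : E.IsConflation κ π) (hP : E.ProjObj P) (hK : K ∈ E.leftPerp Y)
    (hH : H ∈ E.leftPerp (E.idSet Y m)) : K ∈ E.leftPerp (E.idSet Y (m + 1)) := by
  intro V hV
  obtain ⟨k, hk, hV⟩ := mem_idSet_iff.1 hV
  cases k with
  | zero => exact hE.ext1Zero_of_idLE_zero hV hK
  | succ j =>
    obtain ⟨V', hV', V₁, Y₀, f, g, hY₀, hc, hV₁⟩ := hV
    exact hE.ext1Zero_sub_of_syzygy hproj hκ hP hc (hK Y₀ hY₀)
      (hH V₁ (mem_idSet_iff.2 ⟨j, by omega, V', hV', hV₁⟩))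

end IsExactCategory

namespace IsCotorsionPair

variable {X : Set A}

lemma ext1Zero (h : E.IsCotorsionPair X Y) {N : A} (hN : N ∈ X) (hM : M ∈ Y) :
    E.Ext1Zero N M := by
  rw [← h.2] at hN
  exact hN M hM

lemma mem_left_of_projObj (h : E.IsCotorsionPair X Y) {P : A} (hP : E.ProjObj P) : P ∈ X := by
  rw [← h.2]
  exact fun _ _ _ _ _ hc => hP ⟨_, _, hc⟩ (𝟙 P)

lemma mem_left_of_mem_leftPerp_idSet (h : E.IsCotorsionPair X Y)
    (hM : M ∈ E.leftPerp (E.idSet Y m)) : M ∈ X := by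
  rw [← h.2]
  exact leftPerp_idSet_subset hM

lemma mem_right_of_idLE_zero (h : E.IsCotorsionPair X Y) (hE : E.IsExactCategory)
    (hM : E.idLE Y 0 M) : M ∈ Y := by
  rw [← h.1]
  exact fun _ hN => hE.ext1Zero_of_idLE_zero hM fun _ hV => h.ext1Zero hN hV

lemma mem_right_of_isZero (h : E.IsCotorsionPair X Y) (hE : E.IsExactCategory)
    (hM : IsZero M) : M ∈ Y := by
  rw [← h.1]
  exact fun N _ => hE.ext1Zero_of_isZero hM N

lemma syzygies_subset (h : E.IsCotorsionPair X Y) (hher : E.HereditaryClasses X Y) :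
    E.syzygies X ⊆ X :=
  fun _ ⟨_, _, _, _, hP, hκ, hH⟩ => hher.1 hκ (h.mem_left_of_projObj hP) hH

end IsCotorsionPair

lemma IsExactCategory.isHomExact (hE : E.IsExactCategory) {T G Q : A} {f : M ⟶ G}
    {g : G ⟶ Q} (hc : E.IsConflation f g) (hsurj : ∀ h : T ⟶ Q, ∃ h' : T ⟶ G, h' ≫ g = h) :
    IsHomExact T f g := by
  have := hE.mono_of_isConflation hc
  exact ⟨fun _ _ => (cancel_mono f).1, hE.exists_lift_of_comp_eq_zero hc, hsurj⟩

namespace IsHereditaryHoveyTriple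

variable {C W F : Set A}

lemma idLE_of_ext1Zero_iterate_syzygies (hH : E.IsHereditaryHoveyTriple C W F)
    (hE : E.IsExactCategory) (hproj : E.EnoughProjectives) {n : ℕ} {Q : A} (hQ : Q ∈ C ∩ W)
    (hQext : ∀ K ∈ E.syzygies^[n] (C ∩ W), E.Ext1Zero K Q) : E.idLE (W ∩ F) n Q := by
  obtain ⟨⟨hcp₁, hcp₂, hW⟩, hher, -⟩ := hH
  induction n generalizing Q with
  | zero =>
    refine ⟨Q, ⟨hQ.2, ?_⟩, ⟨Iso.refl Q⟩⟩
    rw [← hcp₁.1.1]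
    exact hQext
  | succ j ih =>
    obtain ⟨V, Q', f, g, hV, hQ'C, hc⟩ := hcp₂.2.2 Q
    refine idLE_succ_of_isConflation hc hV (ih ⟨hQ'C, (hW.2 hc).1 hQ.2 hV.1⟩ fun K hK => ?_)
    obtain ⟨K', P, κ, π, hP, hκ⟩ := hproj K
    have hKC : K ∈ C := (iterate_syzygies_subset (hcp₁.1.syzygies_subset hher) j hK).1
    refine hE.ext1Zero_quotient_of_syzygy hκ hP hc (hcp₂.1.ext1Zero hKC hV) (hQext K' ?_)
    rw [Function.iterate_succ_apply']
    exact ⟨P, K, κ, π, hP, hκ, hK⟩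

lemma exists_isConflation_of_mem_idSet (hH : E.IsHereditaryHoveyTriple C W F)
    (hE : E.IsExactCategory) (hproj : E.EnoughProjectives) {M : A} {n : ℕ}
    (hM : M ∈ E.idSet F n) : ∃ (N L : A) (f : N ⟶ L) (g : L ⟶ M),
      E.IsConflation f g ∧ L ∈ E.idSet (W ∩ F) n ∧ N ∈ F := by
  have ⟨⟨hcp₁, _, _⟩, hher, _⟩ := hH
  have hsyz : E.syzygies (C ∩ W) ⊆ C ∩ W := hcp₁.1.syzygies_subset hher
  obtain ⟨k, hkn, hk⟩ := mem_idSet_iff.1 hM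
  obtain ⟨N, L, f, g, hN, hL, hc⟩ := hcp₁.2.1 M
  refine ⟨N, L, f, g, hc, mem_idSet_iff.2 ⟨n, le_rfl, ?_⟩, hN⟩
  refine hH.idLE_of_ext1Zero_iterate_syzygies hE hproj hL fun K hK => ?_
  refine hE.ext1Zero_middle hproj hc (hcp₁.1.ext1Zero (iterate_syzygies_subset hsyz n hK) hN) ?_
  exact hE.ext1Zero_iterate_syzygies_of_idLE hproj (fun _ hK _ hV => hcp₁.1.ext1Zero hK hV)
    hsyz hk K (iterate_syzygies_antitone hsyz hkn hK)

lemma exists_isHomExact_of_isConflation (hH : E.IsHereditaryHoveyTriple C W F)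
    (hE : E.IsExactCategory) {M N L : A} {n : ℕ} {f : N ⟶ L} {g : L ⟶ M}
    (hc : E.IsConflation f g) (hL : L ∈ E.idSet (W ∩ F) n) (hN : N ∈ F) :
    ∃ (G Q : A) (f : M ⟶ G) (g : G ⟶ Q), E.IsConflation f g ∧ G ∈ F ∧
      (n = 0 → IsZero Q) ∧ (∀ m, n = m + 1 → Q ∈ E.idSet (W ∩ F) m) ∧
      ∀ X ∈ E.leftPerp (E.idSet (W ∩ F) n), IsHomExact X f g := by
  obtain ⟨⟨-, hcp₂, -⟩, hher, -⟩ := hH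
  obtain ⟨k, hkn, hk⟩ := mem_idSet_iff.1 hL
  cases k with
  | zero =>
    have hMF : M ∈ F := hher.2 hc hN (hcp₂.1.mem_right_of_idLE_zero hE hk).2
    obtain ⟨Z, z, hz, hZ⟩ := hE.exists_isConflation_id M
    exact ⟨M, Z, 𝟙 M, z, hz, hMF, fun _ => hZ,
      fun m _ => mem_idSet_of_mem (hcp₂.1.mem_right_of_isZero hE hZ) m,
      fun _ _ => hE.isHomExact hz fun h => ⟨0, hZ.eq_of_tgt _ _⟩⟩
  | succ j =>
    obtain ⟨L', hL', L₁, Y₀, u, w, hY₀, hu, hL₁⟩ := hk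
    obtain ⟨G, v, f', g', hcv, hc', hvg'⟩ := hE.exists_splice hc hu
    refine ⟨G, L₁, f', g', hc', hher.2 hcv hN hY₀.2, by omega,
      fun m hm => mem_idSet_iff.2 ⟨j, by omega, L', hL', hL₁⟩,
      fun X hX => hE.isHomExact hc' fun h => ?_⟩
    obtain ⟨l, hl⟩ := hE.exists_lift_of_ext1Zero hu (hX L hL) h
    exact ⟨l ≫ v, by rw [Category.assoc, hvg', hl]⟩

lemma ext1Zero_of_isHomExact (hH : E.IsHereditaryHoveyTriple C W F) (hE : E.IsExactCategory)
    (hproj : E.EnoughProjectives) {M G Q : A} {n : ℕ} {f : M ⟶ G} {g : G ⟶ Q}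
    (hc : E.IsConflation f g) (hG : G ∈ F)
    (hexact : ∀ X ∈ E.leftPerp (E.idSet (W ∩ F) n), IsHomExact X f g) :
    ∀ H ∈ W ∩ E.leftPerp (E.idSet (W ∩ F) n), E.Ext1Zero H M := by
  obtain ⟨⟨hcp₁, hcp₂, -⟩, -, -⟩ := hH
  rintro H ⟨hHW, hHX⟩
  have hHC : H ∈ C := hcp₂.1.mem_left_of_mem_leftPerp_idSet hHX
  exact hE.ext1Zero_sub_of_forall_lift hproj hc (hcp₁.1.ext1Zero ⟨hHC, hHW⟩ hG)
    (hexact H hHX).2.2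

lemma mem_idSet_of_ext1Zero (hH : E.IsHereditaryHoveyTriple C W F) (hE : E.IsExactCategory)
    (hproj : E.EnoughProjectives) {M : A} {n : ℕ}
    (hM : ∀ H ∈ W ∩ E.leftPerp (E.idSet (W ∩ F) n), E.Ext1Zero H M) : M ∈ E.idSet F n := by
  obtain ⟨⟨hcp₁, hcp₂, -⟩, hher, -⟩ := hH
  induction n generalizing M with
  | zero =>
    refine mem_idSet_of_mem ?_ 0
    rw [← hcp₁.1.1]
    refine fun H hH => hM H ⟨hH.2, fun V hV => hcp₁.1.ext1Zero hH ?_⟩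
    exact (hcp₂.1.mem_right_of_idLE_zero hE (mem_idSet_zero_iff.1 hV)).2
  | succ m ih =>
    obtain ⟨G, Q, f, g, hG, hQ, hc⟩ := hcp₁.2.2 M
    refine mem_idSet_succ_of_isConflation hc hG (ih fun H ⟨hHW, hHX⟩ => ?_)
    have hHCW : H ∈ C ∩ W := ⟨hcp₂.1.mem_left_of_mem_leftPerp_idSet hHX, hHW⟩
    obtain ⟨K, P, κ, π, hP, hκ⟩ := hproj H
    have hK : K ∈ C ∩ W := hcp₁.1.syzygies_subset hher ⟨P, H, κ, π, hP, hκ, hHCW⟩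
    refine hE.ext1Zero_quotient_of_syzygy hκ hP hc (hcp₁.1.ext1Zero hHCW hG) (hM K ⟨hK.2, ?_⟩)
    exact hE.mem_leftPerp_idSet_succ_of_syzygy hproj hκ hP (fun _ hV => hcp₂.1.ext1Zero hK.1 hV)
      hHX

end IsHereditaryHoveyTriple

end ExactStruct

end Development

theorem statement6 {A : Type u} [Category.{v} A] [Preadditive A]
    (E : ExactStruct A) (hE : E.IsExactCategory)
    (hproj : E.EnoughProjectives)
    (C W F : Set A)
    (hH : E.IsHereditaryHoveyTriple C W F)
    (M : A) (n : ℕ) :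
    List.TFAE
      [M ∈ E.idSet F n,
       ∃ (G C' : A) (f : M ⟶ G) (g : G ⟶ C'),
         E.IsConflation f g ∧ G ∈ F ∧
         (match n with
          | 0 => IsZero C'
          | (m + 1) => C' ∈ E.idSet (W ∩ F) m) ∧
         (∀ X ∈ E.leftPerp (E.idSet (W ∩ F) n),
           (∀ h₁ h₂ : X ⟶ M, h₁ ≫ f = h₂ ≫ f → h₁ = h₂) ∧
           (∀ h : X ⟶ G, h ≫ g = 0 → ∃ h' : X ⟶ M, h' ≫ f = h) ∧
           (∀ h : X ⟶ C', ∃ h' : X ⟶ G, h' ≫ g = h)),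
       ∀ H ∈ W ∩ E.leftPerp (E.idSet (W ∩ F) n), E.Ext1Zero H M,
       ∃ (N L : A) (f : N ⟶ L) (g : L ⟶ M),
         E.IsConflation f g ∧ L ∈ E.idSet (W ∩ F) n ∧ N ∈ F] := by
  tfae_have 1 → 4 := hH.exists_isConflation_of_mem_idSet hE hproj
  tfae_have 4 → 2 := by
    rintro ⟨_, _, _, _, hc, hL, hN⟩
    obtain ⟨G, Q, f, g, hfg, hG, hQ₀, hQ, hexact⟩ :=
      hH.exists_isHomExact_of_isConflation hE hc hL hN
    refine ⟨G, Q, f, g, hfg, hG, ?_, hexact⟩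
    cases n with
    | zero => exact hQ₀ rfl
    | succ m => exact hQ m rfl
  tfae_have 2 → 3 := fun ⟨_, _, _, _, hc, hG, _, hexact⟩ =>
    hH.ext1Zero_of_isHomExact hE hproj hc hG hexact
  tfae_have 3 → 1 := hH.mem_idSet_of_ext1Zero hE hproj
  tfae_finish

end CotorsionPaper
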